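/- Basic inequality for the Lasso: let β̂ minimize β ↦ (1/(2t))‖Y − Xβ‖₂² + λ‖β‖₁ over ℝ^d, let β* ∈ ℝ^d be arbitrary with support S, write ε = Y − Xβ*, and suppose λ ≥ 2‖ε^T X‖_∞/t. Then (1/(2t))‖X(β̂ − β*)‖₂² ≤ (3λ/2)‖β̂_S − β*_S‖₁ − (λ/2)‖β̂_{S^c} − β*_{S^c}‖₁. -/
import Mathlib


/-- Basic inequality for the Lasso: if `β̂` minimizes the `λ`-penalized least squares
objective and `λ ≥ 2‖ε^T X‖_∞ / t` with `ε = Y - Xβ*`, then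
`(1/(2t))‖X(β̂ - β*)‖₂² ≤ (3λ/2)‖(β̂-β*)_S‖₁ - (λ/2)‖(β̂-β*)_{Sᶜ}‖₁`. -/
theorem lasso_basic_inequality (t d : ℕ) (ht : 0 < t)
    (X : Matrix (Fin t) (Fin d) ℝ) (Y : Fin t → ℝ) (lam : ℝ)
    (βhat βstar : Fin d → ℝ)
    (hmin : ∀ β : Fin d → ℝ,
      (1 / (2 * (t : ℝ))) * ∑ i, (Y i - X.mulVec βhat i) ^ 2 + lam * ∑ j, |βhat j|
        ≤ (1 / (2 * (t : ℝ))) * ∑ i, (Y i - X.mulVec β i) ^ 2 + lam * ∑ j, |β j|)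
    (hlam : ∀ r : Fin d,
      2 * |∑ i, (Y i - X.mulVec βstar i) * X i r| / (t : ℝ) ≤ lam) :
    (1 / (2 * (t : ℝ))) * ∑ i, (X.mulVec (βhat - βstar) i) ^ 2
      ≤ (3 * lam / 2) * ∑ j ∈ Finset.univ.filter (fun j => βstar j ≠ 0), |βhat j - βstar j|
        - (lam / 2) * ∑ j ∈ (Finset.univ.filter (fun j => βstar j ≠ 0))ᶜ, |βhat j - βstar j| := by
  rcases Nat.eq_zero_or_pos d with hd | hd
  · subst hd
    simp [Matrix.mulVec, dotProduct]
  set T : ℝ := (t : ℝ) with hTdef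
  have hT : (0 : ℝ) < T := by rw [hTdef]; exact_mod_cast ht
  have h2T : (0 : ℝ) < 2 * T := by positivity
  set S : Finset (Fin d) := Finset.univ.filter (fun j => βstar j ≠ 0) with hS
  set A : ℝ := ∑ j ∈ S, |βhat j - βstar j| with hA
  set B : ℝ := ∑ j ∈ Sᶜ, |βhat j - βstar j| with hB
  set Q : ℝ := ∑ i, (X.mulVec (βhat - βstar) i) ^ 2 with hQ
  set E : ℝ := ∑ i, (Y i - X.mulVec βstar i) * X.mulVec (βhat - βstar) i with hEdef
  have hlam0 : 0 ≤ lam := le_trans (by positivity) (hlam ⟨0, hd⟩)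
  -- expansion of the residual sum of squares
  have hsum : ∑ i, (Y i - X.mulVec βhat i) ^ 2
      = ∑ i, (Y i - X.mulVec βstar i) ^ 2 - 2 * E + Q := by
    rw [hEdef, hQ, Finset.mul_sum, ← Finset.sum_sub_distrib, ← Finset.sum_add_distrib]
    apply Finset.sum_congr rfl
    intro i _
    have hmv : X.mulVec (βhat - βstar) i = X.mulVec βhat i - X.mulVec βstar i := by
      rw [Matrix.mulVec_sub, Pi.sub_apply]
    rw [hmv]; ring
  -- swap sums
  have hswap : E = ∑ r, (∑ i, (Y i - X.mulVec βstar i) * X i r) * (βhat r - βstar r) := by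
    rw [hEdef]
    simp only [Matrix.mulVec, dotProduct, Pi.sub_apply, Finset.mul_sum]
    rw [Finset.sum_comm]
    apply Finset.sum_congr rfl
    intro r _
    rw [Finset.sum_mul]
    apply Finset.sum_congr rfl
    intro i _; ring
  have hEbound : E ≤ lam * T / 2 * (A + B) := by
    rw [hswap]
    have hstep : ∀ r : Fin d,
        (∑ i, (Y i - X.mulVec βstar i) * X i r) * (βhat r - βstar r)
          ≤ lam * T / 2 * |βhat r - βstar r| := by
      intro r
      have h2 := hlam r
      have h3 : |∑ i, (Y i - X.mulVec βstar i) * X i r| ≤ lam * T / 2 := by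
        rw [div_le_iff₀ hT] at h2; linarith
      calc (∑ i, (Y i - X.mulVec βstar i) * X i r) * (βhat r - βstar r)
          ≤ |(∑ i, (Y i - X.mulVec βstar i) * X i r) * (βhat r - βstar r)| := le_abs_self _
        _ = |∑ i, (Y i - X.mulVec βstar i) * X i r| * |βhat r - βstar r| := abs_mul _ _
        _ ≤ lam * T / 2 * |βhat r - βstar r| :=
            mul_le_mul_of_nonneg_right h3 (abs_nonneg _)
    calc ∑ r, (∑ i, (Y i - X.mulVec βstar i) * X i r) * (βhat r - βstar r)
        ≤ ∑ r, lam * T / 2 * |βhat r - βstar r| := Finset.sum_le_sum (fun r _ => hstep r)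
      _ = lam * T / 2 * ∑ r, |βhat r - βstar r| := by rw [Finset.mul_sum]
      _ = lam * T / 2 * (A + B) := by rw [hA, hB, Finset.sum_add_sum_compl]
  -- bound the penalty difference
  have hPc : ∑ j ∈ Sᶜ, (|βstar j| - |βhat j|) = -B := by
    have hzero : ∀ j ∈ Sᶜ, |βstar j| - |βhat j| = -|βhat j - βstar j| := by
      intro j hj
      have : βstar j = 0 := by
        simpa [hS] using hj
      simp [this]
    rw [Finset.sum_congr rfl hzero, hB, ← Finset.sum_neg_distrib]
  have hPS : ∑ j ∈ S, (|βstar j| - |βhat j|) ≤ A := by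
    rw [hA]
    apply Finset.sum_le_sum
    intro j _
    have h1 := abs_sub_abs_le_abs_sub (βstar j) (βhat j)
    rw [abs_sub_comm] at h1
    exact h1
  have hP : (∑ j, |βstar j|) - (∑ j, |βhat j|) ≤ A - B := by
    rw [← Finset.sum_sub_distrib, ← Finset.sum_add_sum_compl S (fun j => |βstar j| - |βhat j|)]
    linarith
  -- use optimality
  have h2 : Q ≤ 2 * E + 2 * T * lam * ((∑ j, |βstar j|) - (∑ j, |βhat j|)) := by
    have h := hmin βstar
    rw [hsum] at h
    have h' := mul_le_mul_of_nonneg_left h h2T.le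
    have hkey : (∑ i, (Y i - X.mulVec βstar i) ^ 2 - 2 * E + Q) + 2 * T * (lam * ∑ j, |βhat j|)
        ≤ (∑ i, (Y i - X.mulVec βstar i) ^ 2) + 2 * T * (lam * ∑ j, |βstar j|) := by
      calc (∑ i, (Y i - X.mulVec βstar i) ^ 2 - 2 * E + Q) + 2 * T * (lam * ∑ j, |βhat j|)
          = 2 * T * (1 / (2 * T) * (∑ i, (Y i - X.mulVec βstar i) ^ 2 - 2 * E + Q)
              + lam * ∑ j, |βhat j|) := by field_simp
        _ ≤ 2 * T * (1 / (2 * T) * ∑ i, (Y i - X.mulVec βstar i) ^ 2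
              + lam * ∑ j, |βstar j|) := h'
        _ = (∑ i, (Y i - X.mulVec βstar i) ^ 2) + 2 * T * (lam * ∑ j, |βstar j|) := by
            field_simp
    obtain ⟨S0, hS0⟩ : ∃ S0, ∑ i, (Y i - X.mulVec βstar i) ^ 2 = S0 := ⟨_, rfl⟩
    rw [hS0] at hkey
    ring_nf at hkey ⊢
    linarith
  rw [one_div_mul_eq_div, div_le_iff₀ h2T]
  nlinarith [mul_le_mul_of_nonneg_left hP (by positivity : (0:ℝ) ≤ 2 * T * lam), hEbound, h2]
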